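/- arXiv:2412.06222 — 8 statements merged into one kernel-verified Lean document; each statement's English description precedes it below -/
import Mathlib

section
/- Under the same setting, the maximizer of the sum of the J−K smallest coordinates over {z ≥ 0 : ∑_j g_j(z_j) ≤ G} is unique. (Proof idea: the feasible set is convex, the objective is concave, and strict convexity of the g_j together with the budget binding at any optimum forces uniqueness via a midpoint argument.) -/
/-!
The objective is concave and the cost `z ↦ ∑ j, g j (z j)` is strictly convex, so if two distinct
maximizers existed, their midpoint would be at least as good and would leave part of the budget
unused. Spending that slack by raising every coordinate by a small `ε > 0` (possible by continuity
of the `g j`) raises the objective by `(J - K) ε > 0`, contradicting maximality.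
-/

open Finset

/-- Sum of the `J - K` smallest coordinates of `z`: the infimum of sums over
`(J-K)`-element subsets of coordinates. -/
noncomputable def sumSmallest (J K : ℕ) (z : Fin J → ℝ) : ℝ :=
  sInf {s : ℝ | ∃ S : Finset (Fin J), S.card = J - K ∧ s = ∑ i ∈ S, z i}

/-- Feasible stuffing vectors: nonnegative, total cost at most `G`. -/
def Feasible (J : ℕ) (g : Fin J → ℝ → ℝ) (G : ℝ) : Set (Fin J → ℝ) :=
  {z | (∀ j, 0 ≤ z j) ∧ ∑ j, g j (z j) ≤ G}

theorem strictConvexOn_sum_apply {ι : Type*} [Fintype ι] {s : Set ℝ} {g : ι → ℝ → ℝ} (hs : Convex ℝ s) (hg : ∀ j, StrictConvexOn ℝ s (g j)) :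
    StrictConvexOn ℝ (Set.univ.pi fun _ => s) (fun z : ι → ℝ => ∑ j, g j (z j)) := by
  refine ⟨convex_pi fun j _ => hs, fun x hx y hy hxy a b ha hb hab => ?_⟩
  obtain ⟨j₀, hj₀⟩ := Function.ne_iff.mp hxy
  have hx' : ∀ j, x j ∈ s := fun j => hx j (Set.mem_univ j)
  have hy' : ∀ j, y j ∈ s := fun j => hy j (Set.mem_univ j)
  simp only [Pi.add_apply, Pi.smul_apply, smul_eq_mul, mul_sum, ← sum_add_distrib]
  refine sum_lt_sum (fun j _ => ?_) ⟨j₀, mem_univ _, ?_⟩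
  · exact (hg j).convexOn.2 (hx' j) (hy' j) ha.le hb.le hab
  · exact (hg j₀).2 (hx' j₀) (hy' j₀) hj₀ ha hb hab

theorem exists_pos_sum_add_lt {ι : Type*} [Fintype ι] {g : ι → ℝ → ℝ} {m : ι → ℝ} {G : ℝ}
    (hg : ∀ j, Continuous (g j)) (hm : ∑ j, g j (m j) < G) :
    ∃ ε > 0, ∑ j, g j (m j + ε) < G := by
  have hφ : Continuous fun t => ∑ j, g j (m j + t) :=
    continuous_finsetSum _ fun j _ => (hg j).comp (continuous_const.add continuous_id)
  have hslack : ∀ᶠ t in nhdsWithin (0 : ℝ) (Set.Ioi 0), ∑ j, g j (m j + t) < G :=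
    nhdsWithin_le_nhds <| hφ.continuousAt.eventually_lt_const (by simpa using hm)
  obtain ⟨ε, hε, hεpos⟩ := (hslack.and self_mem_nhdsWithin).exists
  exact ⟨ε, hεpos, hε⟩

namespace sumSmallest

variable {J K : ℕ}

theorem finite_sums (z : Fin J → ℝ) :
    {s : ℝ | ∃ S : Finset (Fin J), S.card = J - K ∧ s = ∑ i ∈ S, z i}.Finite :=
  (Set.finite_range fun S : Finset (Fin J) => ∑ i ∈ S, z i).subset
    fun _ ⟨S, _, hs⟩ => ⟨S, hs.symm⟩

theorem exists_eq_sum (z : Fin J → ℝ) :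
    ∃ S : Finset (Fin J), S.card = J - K ∧ sumSmallest J K z = ∑ i ∈ S, z i := by
  obtain ⟨S, -, hS⟩ := exists_subset_card_eq (s := (univ : Finset (Fin J)))
    (n := J - K) (by simp)
  have hne : {s : ℝ | ∃ S : Finset (Fin J), S.card = J - K ∧ s = ∑ i ∈ S, z i}.Nonempty :=
    ⟨_, S, hS, rfl⟩
  exact hne.csInf_mem (finite_sums z)

theorem le_sum (z : Fin J → ℝ) {S : Finset (Fin J)} (hS : S.card = J - K) :
    sumSmallest J K z ≤ ∑ i ∈ S, z i :=
  csInf_le (finite_sums z).bddBelow ⟨S, hS, rfl⟩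

theorem concaveOn : ConcaveOn ℝ Set.univ (sumSmallest J K) := by
  refine ⟨convex_univ, fun x _ y _ a b ha hb _ => ?_⟩
  obtain ⟨S, hS, hval⟩ := exists_eq_sum (K := K) (a • x + b • y)
  rw [hval]
  simp only [Pi.add_apply, Pi.smul_apply, smul_eq_mul, sum_add_distrib, ← mul_sum]
  gcongr
  · exact le_sum x hS
  · exact le_sum y hS

theorem add_const (z : Fin J → ℝ) (c : ℝ) :
    sumSmallest J K (fun i => z i + c) = sumSmallest J K z + (J - K : ℕ) * c := by
  have hshift : ∀ S : Finset (Fin J), S.card = J - K →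
      ∑ i ∈ S, (z i + c) = ∑ i ∈ S, z i + (J - K : ℕ) * c := fun S hS => by
    rw [sum_add_distrib, sum_const, hS, nsmul_eq_mul]
  obtain ⟨S, hS, hval⟩ := exists_eq_sum (K := K) fun i => z i + c
  obtain ⟨T, hT, hval'⟩ := exists_eq_sum (K := K) z
  apply le_antisymm
  · rw [hval', ← hshift T hT]
    exact le_sum _ hT
  · rw [hval, hshift S hS]
    gcongr
    exact le_sum z hS

end sumSmallest

theorem exists_feasible_sumSmallest_gt {J K : ℕ} {g : Fin J → ℝ → ℝ} {G : ℝ} (hK : K < J)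
    (hg : ∀ j, Continuous (g j)) {m : Fin J → ℝ} (hm : ∀ j, 0 ≤ m j)
    (hslack : ∑ j, g j (m j) < G) :
    ∃ w ∈ Feasible J g G, sumSmallest J K m < sumSmallest J K w := by
  obtain ⟨ε, hε, hεG⟩ := exists_pos_sum_add_lt hg hslack
  refine ⟨fun i => m i + ε, ⟨fun j => add_nonneg (hm j) hε.le, hεG.le⟩, ?_⟩
  rw [sumSmallest.add_const]
  have hJK : (0 : ℝ) < (J - K : ℕ) := by exact_mod_cast Nat.sub_pos_of_lt hK
  linarith [mul_pos hJK hε]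

theorem stmt1_general (J K : ℕ) (g : Fin J → ℝ → ℝ) (G : ℝ)
    (hK : K < J)
    (hconv : ∀ j, StrictConvexOn ℝ (Set.Ici 0) (g j))
    (hdiff : ∀ j, Differentiable ℝ (g j))
    (z₁ z₂ : Fin J → ℝ)
    (hfeas₁ : z₁ ∈ Feasible J g G) (hfeas₂ : z₂ ∈ Feasible J g G)
    (hmax₁ : ∀ w ∈ Feasible J g G, sumSmallest J K w ≤ sumSmallest J K z₁)
    (hmax₂ : ∀ w ∈ Feasible J g G, sumSmallest J K w ≤ sumSmallest J K z₂) :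
    z₁ = z₂ := by
  by_contra hne
  set m : Fin J → ℝ := (1 / 2 : ℝ) • z₁ + (1 / 2 : ℝ) • z₂
  have hval : sumSmallest J K z₁ = sumSmallest J K z₂ :=
    le_antisymm (hmax₂ z₁ hfeas₁) (hmax₁ z₂ hfeas₂)
  have hm_obj : sumSmallest J K z₁ ≤ sumSmallest J K m := by
    have := (sumSmallest.concaveOn (J := J) (K := K)).2 (Set.mem_univ z₁) (Set.mem_univ z₂)
      (by norm_num : (0 : ℝ) ≤ 1 / 2) (by norm_num : (0 : ℝ) ≤ 1 / 2) (by norm_num)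
    simp only [smul_eq_mul, ← hval] at this
    linarith
  have hcost := (strictConvexOn_sum_apply (convex_Ici 0) hconv).2
    (fun j _ => hfeas₁.1 j) (fun j _ => hfeas₂.1 j) hne
    (by norm_num : (0 : ℝ) < 1 / 2) (by norm_num : (0 : ℝ) < 1 / 2) (by norm_num)
  have hm_slack : ∑ j, g j (m j) < G := by
    simp only [smul_eq_mul] at hcost
    linarith [hfeas₁.2, hfeas₂.2]
  have hm_nonneg : ∀ j, 0 ≤ m j := fun j => by
    simp only [m, Pi.add_apply, Pi.smul_apply, smul_eq_mul]
    linarith [hfeas₁.1 j, hfeas₂.1 j]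
  obtain ⟨w, hw, hlt⟩ :=
    exists_feasible_sumSmallest_gt hK (fun j => (hdiff j).continuous) hm_nonneg hm_slack
  linarith [hmax₁ w hw]

/-- The maximizer of the sum of the `J-K` smallest coordinates over the
feasible set is unique. -/
theorem stmt1 (J K : ℕ) (g : Fin J → ℝ → ℝ) (G : ℝ)
    (hK : K < J) (hG : 0 < G)
    (hconv : ∀ j, StrictConvexOn ℝ (Set.Ici 0) (g j))
    (hdiff : ∀ j, Differentiable ℝ (g j))
    (hmono : ∀ j, StrictMonoOn (g j) (Set.Ici (0 : ℝ)))
    (hzero : ∀ j, g j 0 = 0)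
    (z₁ z₂ : Fin J → ℝ)
    (hfeas₁ : z₁ ∈ Feasible J g G) (hfeas₂ : z₂ ∈ Feasible J g G)
    (hmax₁ : ∀ w ∈ Feasible J g G, sumSmallest J K w ≤ sumSmallest J K z₁)
    (hmax₂ : ∀ w ∈ Feasible J g G, sumSmallest J K w ≤ sumSmallest J K z₂) :
    z₁ = z₂ :=
  stmt1_general J K g G hK hconv hdiff z₁ z₂ hfeas₁ hfeas₂ hmax₁ hmax₂
end

section
/- Under the same setting with G > 0 and K < J, the unique maximizer z* of the sum of the J−K smallest coordinates satisfies |{i : z*_i = max_j z*_j}| ≥ K+1, i.e., at least K+1 coordinates of z* attain the maximum value. -/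
open Finset

lemma sumSet_nonempty (J K : ℕ) (z : Fin J → ℝ) :
    {s : ℝ | ∃ S : Finset (Fin J), S.card = J - K ∧ s = ∑ i ∈ S, z i}.Nonempty := by
  obtain ⟨S, -, hS⟩ := Finset.exists_subset_card_eq
    (show J - K ≤ (Finset.univ : Finset (Fin J)).card by simpa using Nat.sub_le J K)
  exact ⟨∑ i ∈ S, z i, S, hS, rfl⟩

lemma sumSet_finite (J K : ℕ) (z : Fin J → ℝ) :
    {s : ℝ | ∃ S : Finset (Fin J), S.card = J - K ∧ s = ∑ i ∈ S, z i}.Finite := by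
  have h : {s : ℝ | ∃ S : Finset (Fin J), S.card = J - K ∧ s = ∑ i ∈ S, z i} ⊆
      (fun S : Finset (Fin J) => ∑ i ∈ S, z i) '' Set.univ := by
    rintro s ⟨S, -, rfl⟩
    exact ⟨S, trivial, rfl⟩
  exact ((Set.finite_univ).image _).subset h

lemma sumSmallest_le (J K : ℕ) (z : Fin J → ℝ) {S : Finset (Fin J)} (hS : S.card = J - K) :
    sumSmallest J K z ≤ ∑ i ∈ S, z i :=
  csInf_le (sumSet_finite J K z).bddBelow ⟨S, hS, rfl⟩

lemma le_sumSmallest (J K : ℕ) (z : Fin J → ℝ) {b : ℝ}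
    (hb : ∀ S : Finset (Fin J), S.card = J - K → b ≤ ∑ i ∈ S, z i) :
    b ≤ sumSmallest J K z :=
  le_csInf (sumSet_nonempty J K z) (by rintro s ⟨S, hS, rfl⟩; exact hb S hS)

lemma exists_min_exchange (J K : ℕ) (z : Fin J → ℝ) :
    ∃ S : Finset (Fin J), S.card = J - K ∧ sumSmallest J K z = ∑ i ∈ S, z i ∧
      ∀ i ∈ S, ∀ j, j ∉ S → z i ≤ z j := by
  obtain ⟨S, hcard, hsum⟩ := (sumSet_nonempty J K z).csInf_mem (sumSet_finite J K z)
  refine ⟨S, hcard, hsum, ?_⟩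
  intro i hi j hj
  by_contra hlt
  push_neg at hlt
  have hone : 1 ≤ J - K := hcard ▸ Finset.card_pos.mpr ⟨i, hi⟩
  have hjne : j ∉ S.erase i := fun h => hj (Finset.mem_of_mem_erase h)
  have hcard' : (insert j (S.erase i)).card = J - K := by
    rw [Finset.card_insert_of_notMem hjne, Finset.card_erase_of_mem hi, hcard]
    omega
  have hsum' : ∑ x ∈ insert j (S.erase i), z x = ∑ x ∈ S, z x - z i + z j := by
    rw [Finset.sum_insert hjne, Finset.sum_erase_eq_sub hi]
    ring
  have h1 : sumSmallest J K z ≤ ∑ x ∈ insert j (S.erase i), z x :=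
    sumSmallest_le J K z hcard'
  rw [hsum'] at h1
  have h2 : sumSmallest J K z = ∑ i ∈ S, z i := hsum
  linarith

/-- At the unique maximizer, at least `K+1` coordinates attain the maximum value. -/
theorem stmt2 (J K : ℕ) (g : Fin J → ℝ → ℝ) (G : ℝ)
    (hK : K < J) (hG : 0 < G)
    (hconv : ∀ j, StrictConvexOn ℝ (Set.Ici 0) (g j))
    (hdiff : ∀ j, Differentiable ℝ (g j))
    (hmono : ∀ j, StrictMonoOn (g j) (Set.Ici (0 : ℝ)))
    (hzero : ∀ j, g j 0 = 0)
    (z : Fin J → ℝ)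
    (hfeas : z ∈ Feasible J g G)
    (hmax : ∀ w ∈ Feasible J g G, sumSmallest J K w ≤ sumSmallest J K z) :
    K + 1 ≤ (Finset.univ.filter fun i => ∀ j, z j ≤ z i).card := by
  by_contra hcon
  push_neg at hcon
  set A := Finset.univ.filter (fun i : Fin J => ∀ j, z j ≤ z i) with hAdef
  have hAle : A.card ≤ K := by omega
  obtain ⟨hz0, hzG⟩ := hfeas
  have hJpos : 0 < J := Nat.lt_of_le_of_lt (Nat.zero_le K) hK
  obtain ⟨i0, -, hi0max⟩ := Finset.exists_max_image (Finset.univ : Finset (Fin J)) z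
    ⟨⟨0, hJpos⟩, Finset.mem_univ _⟩
  have hM : ∀ j, z j ≤ z i0 := fun j => hi0max j (Finset.mem_univ j)
  have hi0A : i0 ∈ A := Finset.mem_filter.mpr ⟨Finset.mem_univ _, hM⟩
  set M := z i0 with hMdef
  have hM0 : 0 ≤ M := hz0 i0
  -- minimizing subset with exchange property
  obtain ⟨S, hScard, hSsum, hSex⟩ := exists_min_exchange J K z
  have hSA : ∀ a ∈ S, a ∉ A := by
    intro a ha haA
    have haMax : ∀ k, z k ≤ z a := (Finset.mem_filter.mp haA).2
    have hsub : insert a (Finset.univ \ S) ⊆ A := by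
      intro j hj
      rcases Finset.mem_insert.mp hj with rfl | hj
      · exact haA
      · have hjS : j ∉ S := (Finset.mem_sdiff.mp hj).2
        have h1 : z a ≤ z j := hSex a ha j hjS
        exact Finset.mem_filter.mpr ⟨Finset.mem_univ _, fun k => le_trans (haMax k) h1⟩
    have haD : a ∉ Finset.univ \ S := by simp [ha]
    have hcard2 : (insert a (Finset.univ \ S)).card = K + 1 := by
      rw [Finset.card_insert_of_notMem haD,
        Finset.card_sdiff_of_subset (Finset.subset_univ S), Finset.card_univ, Fintype.card_fin, hScard]
      omega
    have := Finset.card_le_card hsub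
    omega
  have hi0S : i0 ∉ S := fun h => hSA i0 h hi0A
  -- the largest non-maximal value
  set B := Finset.univ \ A with hBdef
  have hBne : B.Nonempty := by
    rw [← Finset.card_pos, Finset.card_sdiff_of_subset (Finset.subset_univ A), Finset.card_univ,
      Fintype.card_fin]
    omega
  obtain ⟨j1, hj1B, hj1max⟩ := Finset.exists_max_image B z hBne
  set m2 := z j1 with hm2def
  have hm2nonneg : 0 ≤ m2 := hz0 j1
  have hm2M : m2 < M := by
    have hj1A : j1 ∉ A := (Finset.mem_sdiff.mp hj1B).2
    rw [hAdef] at hj1A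
    simp only [Finset.mem_filter, Finset.mem_univ, true_and] at hj1A
    push_neg at hj1A
    obtain ⟨k, hk⟩ := hj1A
    exact lt_of_lt_of_le hk (hM k)
  set δ := (M - m2) / 2 with hδdef
  have hδpos : 0 < δ := by rw [hδdef]; linarith
  have hδeq : M - δ = m2 + δ := by rw [hδdef]; ring
  have hMδ0 : 0 ≤ M - δ := by rw [hδeq]; linarith
  have hs : 0 < g i0 M - g i0 (M - δ) := by
    have := hmono i0 (Set.mem_Ici.mpr hMδ0) (Set.mem_Ici.mpr hM0) (by linarith : M - δ < M)
    linarith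
  -- continuity: choose ε > 0 with small extra cost
  set F : ℝ → ℝ := fun t => ∑ j ∈ B, (g j (z j + t) - g j (z j)) with hFdef
  have hFcont : Continuous F := by
    apply continuous_finset_sum
    intro j _
    exact ((hdiff j).continuous.comp (continuous_const.add continuous_id)).sub continuous_const
  have hF0 : F 0 = 0 := by simp [hFdef]
  have hopen : IsOpen (F ⁻¹' Set.Iio (g i0 M - g i0 (M - δ))) := isOpen_Iio.preimage hFcont
  have h0mem : (0 : ℝ) ∈ F ⁻¹' Set.Iio (g i0 M - g i0 (M - δ)) := by
    simp only [Set.mem_preimage, Set.mem_Iio, hF0]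
    exact hs
  obtain ⟨r, hr, hball⟩ := Metric.isOpen_iff.mp hopen 0 h0mem
  set ε := min δ (r / 2) with hεdef
  have hεpos : 0 < ε := lt_min hδpos (by linarith)
  have hεδ : ε ≤ δ := min_le_left _ _
  have hεr : ε < r := lt_of_le_of_lt (min_le_right _ _) (by linarith)
  have hFε : F ε < g i0 M - g i0 (M - δ) := by
    have : ε ∈ Metric.ball (0 : ℝ) r := by
      rw [Metric.mem_ball, Real.dist_eq, sub_zero, abs_of_pos hεpos]
      exact hεr
    exact hball this
  -- perturbed vector
  set w : Fin J → ℝ := fun j => if j = i0 then M - δ else if j ∈ A then z j else z j + ε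
    with hwdef
  have hwA : ∀ j ∈ A, j ≠ i0 → w j = z j := by
    intro j hj hne
    simp [hwdef, hne, hj]
  have hwB : ∀ j ∈ B, w j = z j + ε := by
    intro j hj
    have hjA : j ∉ A := (Finset.mem_sdiff.mp hj).2
    have hne : j ≠ i0 := fun h => hjA (h ▸ hi0A)
    simp [hwdef, hne, hjA]
  have hwi0 : w i0 = M - δ := by simp [hwdef]
  have hwfeas : w ∈ Feasible J g G := by
    constructor
    · intro j
      by_cases h1 : j = i0
      · rw [h1, hwi0]; exact hMδ0
      · by_cases h2 : j ∈ A
        · rw [hwA j h2 h1]; exact hz0 j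
        · have : w j = z j + ε := by simp [hwdef, h1, h2]
          rw [this]; linarith [hz0 j]
    · have hsplitw : ∑ j ∈ B, (fun j => g j (w j)) j + ∑ j ∈ A, (fun j => g j (w j)) j
          = ∑ j, g j (w j) := Finset.sum_sdiff (Finset.subset_univ A)
      have hsplitz : ∑ j ∈ B, (fun j => g j (z j)) j + ∑ j ∈ A, (fun j => g j (z j)) j
          = ∑ j, g j (z j) := Finset.sum_sdiff (Finset.subset_univ A)
      have hA1 : ∑ j ∈ A, g j (w j) = g i0 (M - δ) + ∑ j ∈ A.erase i0, g j (z j) := by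
        rw [← Finset.add_sum_erase _ _ hi0A, hwi0]
        congr 1
        exact Finset.sum_congr rfl fun j hj =>
          by rw [hwA j (Finset.mem_of_mem_erase hj) (Finset.ne_of_mem_erase hj)]
      have hA2 : ∑ j ∈ A, g j (z j) = g i0 M + ∑ j ∈ A.erase i0, g j (z j) :=
        (Finset.add_sum_erase _ _ hi0A).symm
      have hB1 : ∑ j ∈ B, g j (w j) = ∑ j ∈ B, g j (z j) + F ε := by
        simp only [hFdef]
        rw [← Finset.sum_add_distrib]
        exact Finset.sum_congr rfl fun j hj => by rw [hwB j hj]; ring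
      simp only at hsplitw hsplitz
      have : ∑ j, g j (w j) = ∑ j, g j (z j) - (g i0 M - g i0 (M - δ)) + F ε := by
        rw [← hsplitw, ← hsplitz, hA1, hA2, hB1]; ring
      rw [this]
      linarith
  -- lower bound for sumSmallest w
  have hSne : S.Nonempty := Finset.card_pos.mp (by rw [hScard]; omega)
  obtain ⟨i1, hi1S, hi1max⟩ := Finset.exists_max_image S z hSne
  set μ := z i1 with hμdef
  have hμm2 : μ ≤ m2 :=
    hj1max i1 (Finset.mem_sdiff.mpr ⟨Finset.mem_univ _, hSA i1 hi1S⟩)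
  set v : Fin J → ℝ := fun j => if j ∈ S then z j else μ with hvdef
  have hkey : ∀ j, v j + ε ≤ w j := by
    intro j
    by_cases hjS : j ∈ S
    · have hjA : j ∉ A := hSA j hjS
      have hne : j ≠ i0 := fun h => hjA (h ▸ hi0A)
      simp [hvdef, hwdef, hjS, hjA, hne]
    · have hvj : v j = μ := by simp [hvdef, hjS]
      by_cases hne : j = i0
      · rw [hvj, hne, hwi0]; linarith
      · by_cases hjA : j ∈ A
        · rw [hvj, hwA j hjA hne]
          have : M ≤ z j := (Finset.mem_filter.mp hjA).2 i0
          linarith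
        · have hwj : w j = z j + ε := by simp [hwdef, hne, hjA]
          rw [hvj, hwj]
          have : μ ≤ z j := hSex i1 hi1S j hjS
          linarith
  have hbound : ∀ S' : Finset (Fin J), S'.card = J - K →
      ∑ i ∈ S, z i + ((J - K : ℕ) : ℝ) * ε ≤ ∑ i ∈ S', w i := by
    intro S' hS'
    have h1 : ∑ i ∈ S', (v i + ε) ≤ ∑ i ∈ S', w i :=
      Finset.sum_le_sum fun i _ => hkey i
    have h2 : ∑ i ∈ S', (v i + ε) = ∑ i ∈ S', v i + ((J - K : ℕ) : ℝ) * ε := by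
      rw [Finset.sum_add_distrib, Finset.sum_const, hS', nsmul_eq_mul]
    have e1 : ∑ i ∈ S', v i = ∑ i ∈ S' ∩ S, z i + ((S' \ S).card : ℝ) * μ := by
      rw [← Finset.sum_inter_add_sum_sdiff S' S v]
      congr 1
      · exact Finset.sum_congr rfl fun i hi => by simp [hvdef, (Finset.mem_inter.mp hi).2]
      · rw [Finset.sum_congr rfl (fun i hi =>
            show v i = μ by simp [hvdef, (Finset.mem_sdiff.mp hi).2]),
          Finset.sum_const, nsmul_eq_mul]
    have e2 : ∑ i ∈ S, z i = ∑ i ∈ S ∩ S', z i + ∑ i ∈ S \ S', z i :=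
      (Finset.sum_inter_add_sum_sdiff S S' z).symm
    have e3 : ∑ i ∈ S \ S', z i ≤ ((S \ S').card : ℝ) * μ := by
      calc ∑ i ∈ S \ S', z i ≤ ∑ _i ∈ S \ S', μ :=
            Finset.sum_le_sum fun i hi => hi1max i (Finset.mem_sdiff.mp hi).1
        _ = ((S \ S').card : ℝ) * μ := by rw [Finset.sum_const, nsmul_eq_mul]
    have e4 : (S \ S').card = (S' \ S).card := by
      have c1 := Finset.card_sdiff_add_card_inter S S'
      have c2 := Finset.card_sdiff_add_card_inter S' S
      rw [Finset.inter_comm] at c2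
      omega
    have e5 : ∑ i ∈ S ∩ S', z i = ∑ i ∈ S' ∩ S, z i := by rw [Finset.inter_comm]
    have h3 : ∑ i ∈ S, z i ≤ ∑ i ∈ S', v i := by
      rw [e1, e2, e5, ← e4]
      linarith
    linarith
  have hge : ∑ i ∈ S, z i + ((J - K : ℕ) : ℝ) * ε ≤ sumSmallest J K w :=
    le_sumSmallest J K w hbound
  have hle := hmax w hwfeas
  have hpos : 0 < ((J - K : ℕ) : ℝ) * ε := by
    have h1 : (1 : ℝ) ≤ ((J - K : ℕ) : ℝ) := by exact_mod_cast (by omega : 1 ≤ J - K)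
    nlinarith
  rw [hSsum] at hle
  linarith
end

section
/- Let y ∈ ℝ^n be such that every sum of v of its coordinates is nonnegative (i.e., for every v-element subset S of {1,...,n}, ∑_{i∈S} y_i ≥ 0). Let p ∈ ℝ^n with 0 ≤ p_i ≤ 1 for all i and ∑_i p_i = v. Then ∑_i p_i y_i ≥ ∑_{i=n−v+1}^n y_i ≥ 0, where y is sorted in descending order. In particular ∑_i p_i y_i ≥ 0. -/
open Finset

/-- Key lemma: there is a card-`v` subset whose sum is at most the weighted sum. -/
theorem stmt4_aux (n v : ℕ) (hv : v ≤ n) (y p : Fin n → ℝ)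
    (hp0 : ∀ i, 0 ≤ p i) (hp1 : ∀ i, p i ≤ 1) (hsum : ∑ i, p i = (v : ℝ)) :
    ∃ S : Finset (Fin n), S.card = v ∧ ∑ i ∈ S, y i ≤ ∑ i, p i * y i := by
  -- the family of card-v subsets is nonempty
  obtain ⟨S0, -, hS0⟩ := Finset.exists_subset_card_eq (s := (Finset.univ : Finset (Fin n)))
    (n := v) (by simpa using hv)
  have hne : ((Finset.univ : Finset (Fin n)).powersetCard v).Nonempty :=
    ⟨S0, by simp [Finset.mem_powersetCard, hS0]⟩
  obtain ⟨S, hSmem, hSmin⟩ := Finset.exists_min_image _ (fun S => ∑ i ∈ S, y i) hne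
  have hScard : S.card = v := (Finset.mem_powersetCard.mp hSmem).2
  refine ⟨S, hScard, ?_⟩
  -- swap property: elements of S have y-values ≤ elements outside S
  have hswap : ∀ i ∈ S, ∀ j, j ∉ S → y i ≤ y j := by
    intro i hi j hj
    have hjS : j ∉ S.erase i := fun h => hj (Finset.mem_of_mem_erase h)
    set S' := insert j (S.erase i) with hS'
    have hS'card : S'.card = v := by
      have h1c : 1 ≤ S.card := Finset.card_pos.mpr ⟨i, hi⟩
      rw [hS', Finset.card_insert_of_notMem hjS, Finset.card_erase_of_mem hi]
      omega
    have hS'mem : S' ∈ (Finset.univ : Finset (Fin n)).powersetCard v := by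
      simp [Finset.mem_powersetCard, hS'card]
    have hle := hSmin S' hS'mem
    have hsum1 : ∑ k ∈ S, y k = y i + ∑ k ∈ S.erase i, y k :=
      (Finset.add_sum_erase S y hi).symm
    have hsum2 : ∑ k ∈ S', y k = y j + ∑ k ∈ S.erase i, y k := by
      rw [hS', Finset.sum_insert hjS]
    linarith
  -- handle v = 0
  rcases Nat.eq_zero_or_pos v with hv0 | hvpos
  · have hSempty : S = ∅ := Finset.card_eq_zero.mp (by rw [hScard, hv0])
    have hp : ∀ i, p i = 0 := by
      intro i
      have h0 : ∑ i, p i = 0 := by rw [hsum, hv0]; norm_num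
      have := Finset.sum_eq_zero_iff_of_nonneg (fun i _ => hp0 i) |>.mp h0
      exact this i (Finset.mem_univ i)
    simp [hSempty, hp]
  · have hSne : S.Nonempty := Finset.card_pos.mp (by rw [hScard]; exact hvpos)
    set t := S.sup' hSne y with ht
    have hSt : ∀ i ∈ S, y i ≤ t := fun i hi => Finset.le_sup' y hi
    have hCt : ∀ j, j ∉ S → t ≤ y j := by
      intro j hj
      exact Finset.sup'_le hSne y (fun i hi => hswap i hi j hj)
    have hsplit : ∑ i, p i * y i = ∑ i ∈ S, p i * y i + ∑ i ∈ Sᶜ, p i * y i :=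
      (Finset.sum_add_sum_compl S _).symm
    have h1 : ∑ i ∈ S, y i ≤ ∑ i ∈ S, (p i * y i + (1 - p i) * t) := by
      apply Finset.sum_le_sum
      intro i hi
      nlinarith [hp1 i, hSt i hi]
    have h2 : ∑ j ∈ Sᶜ, p j * t ≤ ∑ j ∈ Sᶜ, p j * y j := by
      apply Finset.sum_le_sum
      intro j hj
      have hjS : j ∉ S := by simpa using hj
      nlinarith [hp0 j, hCt j hjS]
    have hA : ∑ i ∈ S, p i + ∑ i ∈ Sᶜ, p i = (v : ℝ) := by
      rw [Finset.sum_add_sum_compl S p]; exact hsum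
    have hcardS : ∑ i ∈ S, (1 : ℝ) = (v : ℝ) := by
      rw [Finset.sum_const, hScard]; simp
    have e1 : ∑ i ∈ S, (p i * y i + (1 - p i) * t)
        = ∑ i ∈ S, p i * y i + ((v : ℝ) - ∑ i ∈ S, p i) * t := by
      rw [Finset.sum_add_distrib]
      congr 1
      rw [← Finset.sum_mul, Finset.sum_sub_distrib, hcardS]
    have e2 : ∑ j ∈ Sᶜ, p j * t = (∑ j ∈ Sᶜ, p j) * t := by
      rw [Finset.sum_mul]
    have hB : (v : ℝ) - ∑ i ∈ S, p i = ∑ j ∈ Sᶜ, p j := by linarith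
    calc ∑ i ∈ S, y i ≤ ∑ i ∈ S, p i * y i + ((v : ℝ) - ∑ i ∈ S, p i) * t := by
          rw [← e1]; exact h1
      _ ≤ ∑ i ∈ S, p i * y i + ∑ j ∈ Sᶜ, p j * y j := by
          rw [hB, ← e2] at *; linarith
      _ = ∑ i, p i * y i := hsplit.symm

/-- If every `v`-subset sum of `y` is nonnegative and `p` is a vector of
probabilities summing to `v`, then the `p`-weighted sum of `y` is at least the
smallest `v`-subset sum of `y` (the sum of the `v` smallest coordinates), and
in particular it is nonnegative. -/
theorem stmt4 (n v : ℕ) (hv : v ≤ n) (y p : Fin n → ℝ)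
    (hy : ∀ S : Finset (Fin n), S.card = v → 0 ≤ ∑ i ∈ S, y i)
    (hp0 : ∀ i, 0 ≤ p i) (hp1 : ∀ i, p i ≤ 1) (hsum : ∑ i, p i = (v : ℝ)) :
    sInf {s : ℝ | ∃ S : Finset (Fin n), S.card = v ∧ s = ∑ i ∈ S, y i}
      ≤ ∑ i, p i * y i ∧ 0 ≤ ∑ i, p i * y i := by
  obtain ⟨S, hScard, hle⟩ := stmt4_aux n v hv y p hp0 hp1 hsum
  have h0 : 0 ≤ ∑ i, p i * y i := le_trans (hy S hScard) hle
  refine ⟨?_, h0⟩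
  have hmem : (∑ i ∈ S, y i) ∈
      {s : ℝ | ∃ S : Finset (Fin n), S.card = v ∧ s = ∑ i ∈ S, y i} := ⟨S, hScard, rfl⟩
  have hbdd : BddBelow {s : ℝ | ∃ S : Finset (Fin n), S.card = v ∧ s = ∑ i ∈ S, y i} := by
    refine ⟨0, ?_⟩
    rintro s ⟨T, hT, rfl⟩
    exact hy T hT
  exact le_trans (csInf_le hbdd hmem) hle
end

section
/- Suppose z ∈ ℝ^J_{≥0} is nonzero with A_z = {i : z_i = ‖z‖_∞} satisfying |A_z| > K, B_z = {i : 0 < z_i < ‖z‖_∞}, C_z = {i : z_i = 0}, and define θ_z = (∑_{j∈A_z} g'_j(z_j))/(|A_z|−K). If (1) g'_j(z_j) ≤ θ_z for all j ∈ A_z and θ_z ≤ g'_ℓ(z_ℓ) for all ℓ ∈ C_z; (2) g'_k(z_k) = θ_z for all k ∈ B_z; and (3) ∑_i g_i(z_i) = G, then z is the unique optimal solution of the Leader-Opt problem (maximize the sum of the J−K smallest coordinates subject to ∑_j g_j(z_j) ≤ G, z ≥ 0). -/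
open Finset

namespace StrictConvexOn

variable {S : Set ℝ} {f : ℝ → ℝ} {x y : ℝ}

theorem add_deriv_mul_sub_lt (hf : StrictConvexOn ℝ S f) (hd : DifferentiableAt ℝ f x)
    (hx : x ∈ S) (hy : y ∈ S) (hyx : y ≠ x) : f x + deriv f x * (y - x) < f y := by
  rcases hyx.lt_or_gt with h | h
  · have hs := hf.slope_lt_deriv hy hx h hd
    rw [slope_def_field, div_lt_iff₀ (sub_pos.2 h)] at hs
    linarith
  · have hs := hf.deriv_lt_slope hx hy h hd
    rw [slope_def_field, lt_div_iff₀ (sub_pos.2 h)] at hs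
    linarith

theorem deriv_pos_of_strictMonoOn (hf : StrictConvexOn ℝ S f) (hmono : StrictMonoOn f S)
    (hd : DifferentiableAt ℝ f x) (hy : y ∈ S) (hx : x ∈ S) (hyx : y < x) : 0 < deriv f x := by
  refine lt_trans ?_ (hf.slope_lt_deriv hy hx hyx hd)
  rw [slope_def_field]
  exact div_pos (sub_pos.2 (hmono hy hx hyx)) (sub_pos.2 hyx)

theorem mul_sub_lt_sub_of_le_deriv (hf : StrictConvexOn ℝ (Set.Ici 0) f)
    (hd : DifferentiableAt ℝ f x) (hx : 0 ≤ x) {μ : ℝ} (hμ : μ ≤ deriv f x)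
    (hslack : 0 < x → μ = deriv f x) (hy : 0 ≤ y) (hyx : y ≠ x) :
    μ * (y - x) < f y - f x := by
  have hgrad := hf.add_deriv_mul_sub_lt hd hx hy hyx
  rcases hx.eq_or_lt with rfl | hx
  · nlinarith [mul_le_mul_of_nonneg_right hμ hy]
  · rw [hslack hx]
    linarith

end StrictConvexOn

theorem exists_card_eq_threshold {ι : Type*} [Fintype ι] [DecidableEq ι] (w : ι → ℝ) {m : ℕ}
    (hm : m ≤ Fintype.card ι) :
    ∃ S : Finset ι, #S = m ∧ ∃ t, (∀ i ∈ S, w i ≤ t) ∧ ∀ i ∉ S, t ≤ w i := by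
  induction m with
  | zero =>
    rcases (univ : Finset ι).eq_empty_or_nonempty with h | h
    · exact ⟨∅, rfl, 0, by simp, fun i _ => absurd (mem_univ i) (by simp [h])⟩
    · obtain ⟨i₀, -, hi₀⟩ := univ.exists_min_image w h
      exact ⟨∅, rfl, w i₀, by simp, fun i _ => hi₀ i (mem_univ i)⟩
  | succ m ih =>
    obtain ⟨S, hScard, t, htS, htSc⟩ := ih (by omega)
    have hSc : Sᶜ.Nonempty := by
      rw [← card_pos, card_compl]
      omega
    obtain ⟨j₀, hj₀S, hj₀⟩ := Sᶜ.exists_min_image w hSc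
    rw [mem_compl] at hj₀S
    refine ⟨insert j₀ S, by rw [card_insert_of_notMem hj₀S, hScard], w j₀, ?_, ?_⟩
    · intro j hj
      rcases mem_insert.1 hj with rfl | hj
      · exact le_rfl
      · exact (htS j hj).trans (htSc j₀ hj₀S)
    · intro j hj
      rw [mem_insert, not_or] at hj
      exact hj₀ j (mem_compl.2 hj.2)

theorem sum_le_sum_mul_of_threshold {ι : Type*} [Fintype ι] {S : Finset ι} {w c : ι → ℝ} {t : ℝ}
    (htS : ∀ i ∈ S, w i ≤ t) (htSc : ∀ i ∉ S, t ≤ w i) (hc0 : ∀ i, 0 ≤ c i)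
    (hc1 : ∀ i, c i ≤ 1) (hc : ∑ i, c i = #S) :
    ∑ i ∈ S, w i ≤ ∑ i, c i * w i := by
  have hshift : ∑ i ∈ S, (w i - t) ≤ ∑ i, c i * (w i - t) :=
    calc ∑ i ∈ S, (w i - t)
        ≤ ∑ i ∈ S, c i * (w i - t) := sum_le_sum fun i hi =>
          by nlinarith [hc1 i, sub_nonpos.2 (htS i hi)]
      _ ≤ ∑ i, c i * (w i - t) := sum_le_sum_of_subset_of_nonneg (subset_univ S)
          fun i _ hi => mul_nonneg (hc0 i) (sub_nonneg.2 (htSc i hi))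
  simp only [mul_sub, sum_sub_distrib, ← sum_mul, hc, sum_const, nsmul_eq_mul] at hshift
  linarith

section sumSmallest

variable {J K : ℕ}

theorem sumSmallest_le_sum (w : Fin J → ℝ) {S : Finset (Fin J)} (hS : #S = J - K) :
    sumSmallest J K w ≤ ∑ i ∈ S, w i :=
  csInf_le ((Set.finite_range fun S : Finset (Fin J) => ∑ i ∈ S, w i).subset
    (by rintro s ⟨S, -, rfl⟩; exact ⟨S, rfl⟩)).bddBelow ⟨S, hS, rfl⟩

theorem sumSmallest_le_sum_mul (hKJ : K ≤ J) {w c : Fin J → ℝ} (hc0 : ∀ j, 0 ≤ c j)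
    (hc1 : ∀ j, c j ≤ 1) (hc : ∑ j, c j = J - K) :
    sumSmallest J K w ≤ ∑ j, c j * w j := by
  obtain ⟨S, hScard, t, htS, htSc⟩ := exists_card_eq_threshold w (m := J - K) (by simp)
  refine (sumSmallest_le_sum w hScard).trans (sum_le_sum_mul_of_threshold htS htSc hc0 hc1 ?_)
  rw [hc, hScard, Nat.cast_sub hKJ]

theorem sum_sub_mul_le_sumSmallest (hKJ : K ≤ J) {z : Fin J → ℝ} {M : ℝ}
    (hzM : ∀ j, z j ≤ M) : ∑ j, z j - K * M ≤ sumSmallest J K z := by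
  obtain ⟨S₀, -, hS₀⟩ := exists_subset_card_eq (s := (univ : Finset (Fin J))) (n := J - K)
    (by simp)
  refine le_csInf ⟨_, S₀, hS₀, rfl⟩ ?_
  rintro _ ⟨S, hS, rfl⟩
  have hSc : #Sᶜ = K := by
    rw [card_compl, Fintype.card_fin, hS]
    omega
  have hbound : ∑ i ∈ Sᶜ, z i ≤ K * M := by
    simpa [hSc] using sum_le_sum fun i (_ : i ∈ Sᶜ) => hzM i
  linarith [sum_add_sum_compl S z]

end sumSmallest

/-- Fractional selection weights for the `J - K` smallest coordinates; against them `θ` is the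
Lagrange multiplier of the budget constraint. -/
noncomputable def dualWeight {ι : Type*} [DecidableEq ι] (A : Finset ι) (d : ι → ℝ) (θ : ℝ)
    (j : ι) : ℝ :=
  if j ∈ A then d j / θ else 1

section dualWeight

variable {ι : Type*} [DecidableEq ι] {A : Finset ι} {d : ι → ℝ} {θ k : ℝ}

theorem dualWeight_of_mem {j : ι} (hj : j ∈ A) : dualWeight A d θ j = d j / θ := if_pos hj

theorem dualWeight_of_notMem {j : ι} (hj : j ∉ A) : dualWeight A d θ j = 1 := if_neg hj

theorem dualWeight_nonneg (hθ : 0 < θ) (hd : ∀ j ∈ A, 0 ≤ d j) (j : ι) :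
    0 ≤ dualWeight A d θ j := by
  unfold dualWeight
  split_ifs with hj
  exacts [div_nonneg (hd j hj) hθ.le, zero_le_one]

theorem dualWeight_le_one (hθ : 0 < θ) (hd : ∀ j ∈ A, d j ≤ θ) (j : ι) :
    dualWeight A d θ j ≤ 1 := by
  unfold dualWeight
  split_ifs with hj
  exacts [(div_le_one hθ).2 (hd j hj), le_rfl]

theorem sum_dualWeight [Fintype ι] (hθ : θ ≠ 0) (hθA : θ * (#A - k) = ∑ j ∈ A, d j) :
    ∑ j, dualWeight A d θ j = Fintype.card ι - k := by
  rw [← sum_add_sum_compl A]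
  have hA : ∑ j ∈ A, dualWeight A d θ j = #A - k := by
    rw [sum_congr rfl fun j hj => dualWeight_of_mem hj, ← sum_div, ← hθA,
      mul_div_cancel_left₀ _ hθ]
  have hAc : ∑ j ∈ Aᶜ, dualWeight A d θ j = Fintype.card ι - #A := by
    rw [sum_congr rfl fun j hj => dualWeight_of_notMem (mem_compl.1 hj), sum_const, card_compl,
      nsmul_one, Nat.cast_sub (card_le_univ A)]
  rw [hA, hAc]
  ring

theorem sum_dualWeight_mul [Fintype ι] {z : ι → ℝ} {M : ℝ} (hθ : θ ≠ 0)
    (hθA : θ * (#A - k) = ∑ j ∈ A, d j) (hzA : ∀ j ∈ A, z j = M) :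
    ∑ j, dualWeight A d θ j * z j = ∑ j, z j - k * M := by
  have hslack : ∀ j, (1 - dualWeight A d θ j) * z j = (1 - dualWeight A d θ j) * M := by
    intro j
    by_cases hj : j ∈ A
    · rw [hzA j hj]
    · rw [dualWeight_of_notMem hj, sub_self, zero_mul, zero_mul]
  have := congrArg (fun s => ∑ j, z j - s) (sum_congr rfl fun j (_ : j ∈ univ) => hslack j)
  simp only [← sum_mul, sum_sub_distrib, sub_mul, one_mul, sum_dualWeight hθ hθA, sum_const,
    card_univ, nsmul_eq_mul] at this
  linarith

/-- Each coordinate of `z` minimises its own Lagrangian `g j y - θ * dualWeight * y` over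
`y ≥ 0`, strictly. -/
theorem mul_dualWeight_mul_sub_lt {g : ι → ℝ → ℝ} {z : ι → ℝ} {j : ι} {y : ℝ}
    (hconv : StrictConvexOn ℝ (Set.Ici 0) (g j)) (hdiff : DifferentiableAt ℝ (g j) (z j))
    (hz0 : 0 ≤ z j) (hθ : θ ≠ 0)
    (hAc : j ∉ A → θ ≤ deriv (g j) (z j) ∧ (0 < z j → θ = deriv (g j) (z j)))
    (hy : 0 ≤ y) (hyz : y ≠ z j) :
    θ * dualWeight A (fun i => deriv (g i) (z i)) θ j * (y - z j) < g j y - g j (z j) := by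
  by_cases hj : j ∈ A
  · rw [dualWeight_of_mem hj, mul_div_cancel₀ _ hθ]
    exact hconv.mul_sub_lt_sub_of_le_deriv hdiff hz0 le_rfl (fun _ => rfl) hy hyz
  · rw [dualWeight_of_notMem hj, mul_one]
    exact hconv.mul_sub_lt_sub_of_le_deriv hdiff hz0 (hAc hj).1 (hAc hj).2 hy hyz

end dualWeight

theorem sum_mul_lt_of_lagrangian_gap {ι : Type*} [Fintype ι] {f : ι → ℝ → ℝ} {c z w : ι → ℝ}
    {θ : ℝ} (hθ : 0 < θ)
    (hgap : ∀ j, w j ≠ z j → θ * c j * (w j - z j) < f j (w j) - f j (z j)) (hwz : w ≠ z)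
    (hcost : ∑ j, f j (w j) ≤ ∑ j, f j (z j)) :
    ∑ j, c j * w j < ∑ j, c j * z j := by
  have hle : ∀ j, θ * c j * (w j - z j) ≤ f j (w j) - f j (z j) := fun j =>
    (eq_or_ne (w j) (z j)).elim (fun h => by simp [h]) fun h => (hgap j h).le
  obtain ⟨j, hj⟩ := Function.ne_iff.1 hwz
  have hlt : θ * (∑ j, c j * w j - ∑ j, c j * z j) < ∑ j, (f j (w j) - f j (z j)) :=
    calc θ * (∑ j, c j * w j - ∑ j, c j * z j) = ∑ j, θ * c j * (w j - z j) := by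
          rw [← sum_sub_distrib, mul_sum]
          exact sum_congr rfl fun _ _ => by ring
      _ < ∑ j, (f j (w j) - f j (z j)) :=
          sum_lt_sum (fun j _ => hle j) ⟨j, mem_univ j, hgap j hj⟩
  rw [sum_sub_distrib] at hlt
  exact sub_neg.1 (neg_of_mul_neg_right (hlt.trans_le (sub_nonpos.2 hcost)) hθ.le)

theorem sumSmallest_lt_of_dualWeight {J K : ℕ} (hKJ : K ≤ J) {g : Fin J → ℝ → ℝ}
    {A : Finset (Fin J)} {d z w : Fin J → ℝ} {θ M : ℝ} (hθ : 0 < θ) (hd0 : ∀ j ∈ A, 0 ≤ d j)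
    (hdθ : ∀ j ∈ A, d j ≤ θ) (hθA : θ * (#A - K) = ∑ j ∈ A, d j) (hzM : ∀ j, z j ≤ M)
    (hzA : ∀ j ∈ A, z j = M)
    (hgap : ∀ j, w j ≠ z j → θ * dualWeight A d θ j * (w j - z j) < g j (w j) - g j (z j))
    (hwz : w ≠ z) (hcost : ∑ j, g j (w j) ≤ ∑ j, g j (z j)) :
    sumSmallest J K w < sumSmallest J K z :=
  calc sumSmallest J K w ≤ ∑ j, dualWeight A d θ j * w j :=
        sumSmallest_le_sum_mul hKJ (dualWeight_nonneg hθ hd0) (dualWeight_le_one hθ hdθ)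
          (by simpa using sum_dualWeight hθ.ne' hθA)
    _ < ∑ j, dualWeight A d θ j * z j := sum_mul_lt_of_lagrangian_gap hθ hgap hwz hcost
    _ = ∑ j, z j - K * M := sum_dualWeight_mul hθ.ne' hθA hzA
    _ ≤ sumSmallest J K z := sum_sub_mul_le_sumSmallest hKJ hzM

theorem stmt6_general (J K : ℕ) (g : Fin J → ℝ → ℝ) (G : ℝ)
    (hK : K < J)
    (hconv : ∀ j, StrictConvexOn ℝ (Set.Ici 0) (g j))
    (hdiff : ∀ j, Differentiable ℝ (g j))
    (hmono : ∀ j, StrictMonoOn (g j) (Set.Ici (0 : ℝ)))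
    (z : Fin J → ℝ) (hz0 : ∀ j, 0 ≤ z j) (hznz : z ≠ 0)
    (A B C : Finset (Fin J)) (θ : ℝ)
    (hA : A = Finset.univ.filter fun i => ∀ j, z j ≤ z i)
    (hB : B = Finset.univ.filter fun i => 0 < z i ∧ ∃ j, z i < z j)
    (hC : C = Finset.univ.filter fun i => z i = 0)
    (hAK : K < A.card)
    (hθ : θ = (∑ j ∈ A, deriv (g j) (z j)) / ((A.card : ℝ) - K))
    (hslopeA : ∀ j ∈ A, deriv (g j) (z j) ≤ θ)
    (hslopeC : ∀ j ∈ C, θ ≤ deriv (g j) (z j))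
    (hstruct : ∀ j ∈ B, deriv (g j) (z j) = θ)
    (hbudget : ∑ j, g j (z j) = G) :
    z ∈ Feasible J g G ∧
    (∀ w ∈ Feasible J g G, sumSmallest J K w ≤ sumSmallest J K z) ∧
    (∀ w ∈ Feasible J g G, sumSmallest J K w = sumSmallest J K z → w = z) := by
  obtain ⟨i₀, hi₀⟩ : A.Nonempty := card_pos.1 (by omega)
  have hzM : ∀ j, z j ≤ z i₀ := by simpa [hA] using hi₀
  have hzA : ∀ j ∈ A, z j = z i₀ := fun j hj =>
    (hzM j).antisymm (by rw [hA, mem_filter] at hj; exact hj.2 i₀)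
  have hM : 0 < z i₀ := by
    obtain ⟨j, hj⟩ := Function.ne_iff.1 hznz
    exact ((hz0 j).lt_of_ne' hj).trans_le (hzM j)
  have hdA : ∀ j ∈ A, 0 < deriv (g j) (z j) := fun j hj => (hconv j).deriv_pos_of_strictMonoOn
    (hmono j) (hdiff j _) Set.self_mem_Ici (hz0 j) (hzA j hj ▸ hM)
  have hcard : (0 : ℝ) < A.card - K := sub_pos.2 (by exact_mod_cast hAK)
  have hθ0 : 0 < θ := hθ ▸ div_pos (sum_pos hdA ⟨i₀, hi₀⟩) hcard
  have hAc : ∀ j ∉ A, θ ≤ deriv (g j) (z j) ∧ (0 < z j → θ = deriv (g j) (z j)) := by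
    intro j hj
    rcases (hz0 j).eq_or_lt with hzj | hzj
    · exact ⟨hslopeC j (by simp [hC, hzj]), fun h => absurd hzj.symm h.ne'⟩
    obtain ⟨k, hk⟩ : ∃ k, z j < z k := by simpa [hA] using hj
    have hjB : j ∈ B := by simpa [hB] using ⟨hzj, k, hk⟩
    exact ⟨(hstruct j hjB).ge, fun _ => (hstruct j hjB).symm⟩
  have hlt : ∀ w ∈ Feasible J g G, w ≠ z → sumSmallest J K w < sumSmallest J K z :=
    fun w hw hwz => sumSmallest_lt_of_dualWeight hK.le hθ0 (fun j hj => (hdA j hj).le) hslopeA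
      (by rw [hθ, div_mul_cancel₀ _ hcard.ne']) hzM hzA
      (fun j hj => mul_dualWeight_mul_sub_lt (hconv j) (hdiff j _) (hz0 j) hθ0.ne' (hAc j)
        (hw.1 j) hj) hwz (hbudget ▸ hw.2)
  refine ⟨⟨hz0, hbudget.le⟩, fun w hw => ?_,
    fun w hw h => not_not.1 fun hwz => (hlt w hw hwz).ne h⟩
  rcases eq_or_ne w z with rfl | hwz
  exacts [le_rfl, (hlt w hw hwz).le]

/-- Sufficiency direction of the structure theorem: a nonzero nonnegative `z`
with `|A_z| > K` satisfying the slope-order, structure-slope, and sum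
conditions is the unique optimal solution of Leader-Opt. -/
theorem stmt6 (J K : ℕ) (g : Fin J → ℝ → ℝ) (G : ℝ)
    (hK0 : 0 < K) (hK : K < J) (hG : 0 < G)
    (hconv : ∀ j, StrictConvexOn ℝ (Set.Ici 0) (g j))
    (hdiff : ∀ j, Differentiable ℝ (g j))
    (hmono : ∀ j, StrictMonoOn (g j) (Set.Ici (0 : ℝ)))
    (hzero : ∀ j, g j 0 = 0)
    (z : Fin J → ℝ) (hz0 : ∀ j, 0 ≤ z j) (hznz : z ≠ 0)
    (A B C : Finset (Fin J)) (θ : ℝ)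
    (hA : A = Finset.univ.filter fun i => ∀ j, z j ≤ z i)
    (hB : B = Finset.univ.filter fun i => 0 < z i ∧ ∃ j, z i < z j)
    (hC : C = Finset.univ.filter fun i => z i = 0)
    (hAK : K < A.card)
    (hθ : θ = (∑ j ∈ A, deriv (g j) (z j)) / ((A.card : ℝ) - K))
    (hslopeA : ∀ j ∈ A, deriv (g j) (z j) ≤ θ)
    (hslopeC : ∀ j ∈ C, θ ≤ deriv (g j) (z j))
    (hstruct : ∀ j ∈ B, deriv (g j) (z j) = θ)
    (hbudget : ∑ j, g j (z j) = G) :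
    z ∈ Feasible J g G ∧
    (∀ w ∈ Feasible J g G, sumSmallest J K w ≤ sumSmallest J K z) ∧
    (∀ w ∈ Feasible J g G, sumSmallest J K w = sumSmallest J K z → w = z) :=
  stmt6_general J K g G hK hconv hdiff hmono z hz0 hznz A B C θ hA hB hC hAK hθ hslopeA hslopeC
    hstruct hbudget
end

section
/- In the Calc_Z routine with Cost Ordering assumption, the two error conditions are mutually exclusive: it cannot simultaneously hold that z_{|A|+1} > z_a (Error P) and g'_{|A|}(z_a) > θ(z_a) (Error Q), where θ(z_a) = (∑_{i=1}^{|A|} g'_i(z_a))/(|A|−K) and z_{|A|+1} = (g'_{|A|+1})^{-1}(θ(z_a)). -/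
open Finset

/-- In `Calc_Z` under the cost-ordering assumption, Error P
(`z_{m+1} > z_a`) and Error Q (`g'_m(z_a) > θ(z_a)`) cannot occur together.
Booths are indexed `1,…,J`; `θ(z_a) = (∑_{i=1}^m g'_i(z_a))/(m-K)` and
`z_{m+1}` is defined by `g'_{m+1}(z_{m+1}) = θ(z_a)`. -/
theorem stmt11 (J K m : ℕ) (g : ℕ → ℝ → ℝ)
    (hconv : ∀ j, StrictConvexOn ℝ (Set.Ici 0) (g j))
    (hdiff : ∀ j, Differentiable ℝ (g j))
    (hmono : ∀ j, StrictMonoOn (g j) (Set.Ici (0 : ℝ)))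
    (horder : ∀ i j, i ≤ j → ∀ x : ℝ, 0 ≤ x → deriv (g i) x ≤ deriv (g j) x)
    (hd0 : ∀ j, deriv (g j) 0 = 0)
    (hK : K < m) (hm : m < J)
    (za zm1 : ℝ) (hza : 0 ≤ za) (hzm1 : 0 ≤ zm1)
    (hθ : deriv (g (m + 1)) zm1 =
      (∑ i ∈ Finset.Icc 1 m, deriv (g i) za) / ((m : ℝ) - K)) :
    ¬ (za < zm1 ∧
        (∑ i ∈ Finset.Icc 1 m, deriv (g i) za) / ((m : ℝ) - K) <
          deriv (g m) za) := by
  rintro ⟨h1, h2⟩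
  have hsm := (hconv (m+1)).strictMonoOn_deriv (fun x _ => (hdiff (m+1)).differentiableAt)
  have h3 : deriv (g (m+1)) za < deriv (g (m+1)) zm1 := hsm hza hzm1 h1
  have h4 : deriv (g m) za ≤ deriv (g (m+1)) za := horder m (m+1) (by omega) za hza
  rw [hθ] at h3
  linarith
end

section
/- Let a candidate size ℓ (with K < ℓ < J) produce common value u for the first ℓ coordinates and let u_{ℓ+1} = (g'_{ℓ+1})^{-1}(θ_ℓ(u)) with θ_ℓ(u) = (∑_{i=1}^ℓ g'_i(u))/(ℓ−K); let candidate size ℓ+1 produce common value v. Both candidates satisfy the same budget identity (equation ∑ costs = G). Then v lies between u and u_{ℓ+1}: min(u, u_{ℓ+1}) ≤ v ≤ max(u, u_{ℓ+1}). -/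
open Finset

/-!
Both candidates have the same shape: a common value `a` on the coordinates `1, …, ℓ`, a value `b`
at `ℓ + 1`, and every later coordinate placed where its marginal cost equals the slope
`(∑_{i ≤ ℓ} g'_i(a) + g'_{ℓ+1}(b)) / (ℓ + 1 - K)`. For the size-`ℓ` candidate
`(a, b) = (u, u_{ℓ+1})`, because `g'_{ℓ+1}(u_{ℓ+1}) = θ_ℓ(u)`; for the size-`(ℓ+1)` candidate
`(a, b) = (v, v)`. Raising `a` and strictly raising `b` strictly raises the slope, hence every
coordinate, hence the total cost. So if `v` were strictly above (or below) both `u` and `u_{ℓ+1}`,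
the two candidates could not have the same budget `G`.
-/

noncomputable section

def splitSlope (g : ℕ → ℝ → ℝ) (K l : ℕ) (a b : ℝ) : ℝ :=
  (∑ i ∈ Icc 1 l, deriv (g i) a + deriv (g (l + 1)) b) / ((l : ℝ) + 1 - K)

def IsSplitProfile (g : ℕ → ℝ → ℝ) (K l J : ℕ) (a b : ℝ) (z : ℕ → ℝ) : Prop :=
  (∀ i ∈ Icc 1 l, z i = a) ∧ z (l + 1) = b ∧
    ∀ i ∈ Icc (l + 2) J, deriv (g i) (z i) = splitSlope g K l a b

end

section

variable {g : ℕ → ℝ → ℝ} {K l J : ℕ}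

theorem splitSlope_lt_splitSlope (hderiv : ∀ j, StrictMonoOn (deriv (g j)) (Set.Ici 0))
    (hKl : (K : ℝ) < l + 1) {a a' b b' : ℝ} (ha : 0 ≤ a) (hb : 0 ≤ b) (haa' : a ≤ a')
    (hbb' : b < b') : splitSlope g K l a b < splitSlope g K l a' b' := by
  have hsum : ∑ i ∈ Icc 1 l, deriv (g i) a ≤ ∑ i ∈ Icc 1 l, deriv (g i) a' :=
    sum_le_sum fun i _ => (hderiv i).monotoneOn ha (ha.trans haa') haa'
  have hlast : deriv (g (l + 1)) b < deriv (g (l + 1)) b' := hderiv _ hb (hb.trans hbb'.le) hbb'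
  exact div_lt_div_of_pos_right (add_lt_add_of_le_of_lt hsum hlast) (by linarith)

theorem IsSplitProfile.le {a a' b b' : ℝ} {z z' : ℕ → ℝ}
    (hderiv : ∀ j, StrictMonoOn (deriv (g j)) (Set.Ici 0)) (hKl : (K : ℝ) < l + 1)
    (ha : 0 ≤ a) (hb : 0 ≤ b) (hz : ∀ i, 0 ≤ z i) (hz' : ∀ i, 0 ≤ z' i)
    (haa' : a ≤ a') (hbb' : b < b') (hP : IsSplitProfile g K l J a b z)
    (hP' : IsSplitProfile g K l J a' b' z') : ∀ i ∈ Icc 1 J, z i ≤ z' i := by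
  obtain ⟨hPa, hPb, hPtail⟩ := hP
  obtain ⟨hPa', hPb', hPtail'⟩ := hP'
  intro i hi
  rw [mem_Icc] at hi
  rcases (show i ≤ l ∨ i = l + 1 ∨ l + 2 ≤ i by omega) with hil | rfl | hil
  · have hi' : i ∈ Icc 1 l := mem_Icc.mpr ⟨hi.1, hil⟩
    rw [hPa i hi', hPa' i hi']
    exact haa'
  · rw [hPb, hPb']
    exact hbb'.le
  · have hi' : i ∈ Icc (l + 2) J := mem_Icc.mpr ⟨hil, hi.2⟩
    have hslope : deriv (g i) (z i) < deriv (g i) (z' i) := by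
      rw [hPtail i hi', hPtail' i hi']
      exact splitSlope_lt_splitSlope hderiv hKl ha hb haa' hbb'
    exact ((hderiv i).lt_iff_lt (hz i) (hz' i)).mp hslope |>.le

theorem IsSplitProfile.sum_lt_sum {a a' b b' : ℝ} {z z' : ℕ → ℝ}
    (hderiv : ∀ j, StrictMonoOn (deriv (g j)) (Set.Ici 0))
    (hmono : ∀ j, StrictMonoOn (g j) (Set.Ici 0)) (hKl : (K : ℝ) < l + 1) (hl : l + 1 ≤ J)
    (ha : 0 ≤ a) (hb : 0 ≤ b) (hz : ∀ i, 0 ≤ z i) (hz' : ∀ i, 0 ≤ z' i)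
    (haa' : a ≤ a') (hbb' : b < b') (hP : IsSplitProfile g K l J a b z)
    (hP' : IsSplitProfile g K l J a' b' z') :
    ∑ i ∈ Icc 1 J, g i (z i) < ∑ i ∈ Icc 1 J, g i (z' i) := by
  have hcoord := hP.le hderiv hKl ha hb hz hz' haa' hbb' hP'
  refine Finset.sum_lt_sum (fun i hi => (hmono i).monotoneOn (hz i) (hz' i) (hcoord i hi))
    ⟨l + 1, mem_Icc.mpr ⟨by omega, hl⟩, hmono _ (hz _) (hz' _) ?_⟩
  rw [hP.2.1, hP'.2.1]
  exact hbb'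

theorem isSplitProfile_of_slope_eq {u : ℝ} {z : ℕ → ℝ} (hKl : (K : ℝ) < l) (hl : l + 1 ≤ J)
    (hza : ∀ i ∈ Icc 1 l, z i = u)
    (hzb : ∀ i ∈ Icc (l + 1) J,
      deriv (g i) (z i) = (∑ i ∈ Icc 1 l, deriv (g i) u) / ((l : ℝ) - K)) :
    IsSplitProfile g K l J u (z (l + 1)) z := by
  set θ := (∑ i ∈ Icc 1 l, deriv (g i) u) / ((l : ℝ) - K) with hθ
  have hθnext : deriv (g (l + 1)) (z (l + 1)) = θ := hzb (l + 1) (mem_Icc.mpr ⟨le_rfl, hl⟩)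
  have hslope : splitSlope g K l u (z (l + 1)) = θ := by
    have hsum : ∑ i ∈ Icc 1 l, deriv (g i) u = θ * ((l : ℝ) - K) := by
      rw [hθ, div_mul_cancel₀ _ (sub_pos.mpr hKl).ne']
    rw [splitSlope, hsum, hθnext, div_eq_iff (by linarith)]
    ring
  refine ⟨hza, rfl, fun i hi => ?_⟩
  obtain ⟨hli, hiJ⟩ := mem_Icc.mp hi
  rw [hslope]
  exact hzb i (mem_Icc.mpr ⟨by omega, hiJ⟩)

theorem isSplitProfile_of_common_value {v : ℝ} {z : ℕ → ℝ}
    (hza : ∀ i ∈ Icc 1 (l + 1), z i = v)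
    (hzb : ∀ i ∈ Icc (l + 2) J,
      deriv (g i) (z i) = (∑ i ∈ Icc 1 (l + 1), deriv (g i) v) / ((l : ℝ) + 1 - K)) :
    IsSplitProfile g K l J v v z := by
  have hblock : Icc 1 l ⊆ Icc 1 (l + 1) := Icc_subset_Icc_right (Nat.le_succ l)
  refine ⟨fun i hi => hza i (hblock hi), hza (l + 1) (mem_Icc.mpr ⟨by omega, le_rfl⟩),
    fun i hi => ?_⟩
  rw [hzb i hi, sum_Icc_succ_top (by omega), splitSlope]

end

theorem stmt13_general (J K l : ℕ) (g : ℕ → ℝ → ℝ) (G : ℝ)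
    (hconv : ∀ j, StrictConvexOn ℝ (Set.Ici 0) (g j))
    (hdiff : ∀ j, Differentiable ℝ (g j))
    (hmono : ∀ j, StrictMonoOn (g j) (Set.Ici (0 : ℝ)))
    (hK : K < l) (hl : l + 1 ≤ J)
    (u v : ℝ) (hu : 0 ≤ u) (hv : 0 ≤ v)
    (z1 z2 : ℕ → ℝ) (hz1nn : ∀ i, 0 ≤ z1 i) (hz2nn : ∀ i, 0 ≤ z2 i)
    (hz1a : ∀ i ∈ Finset.Icc 1 l, z1 i = u)
    (hz1b : ∀ i ∈ Finset.Icc (l + 1) J,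
      deriv (g i) (z1 i) = (∑ i ∈ Finset.Icc 1 l, deriv (g i) u) / ((l : ℝ) - K))
    (hz1G : ∑ i ∈ Finset.Icc 1 J, g i (z1 i) = G)
    (hz2a : ∀ i ∈ Finset.Icc 1 (l + 1), z2 i = v)
    (hz2b : ∀ i ∈ Finset.Icc (l + 2) J,
      deriv (g i) (z2 i) =
        (∑ i ∈ Finset.Icc 1 (l + 1), deriv (g i) v) / ((l : ℝ) + 1 - K))
    (hz2G : ∑ i ∈ Finset.Icc 1 J, g i (z2 i) = G) :
    min u (z1 (l + 1)) ≤ v ∧ v ≤ max u (z1 (l + 1)) := by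
  have hderiv : ∀ j, StrictMonoOn (deriv (g j)) (Set.Ici 0) := fun j =>
    (hconv j).strictMonoOn_deriv fun x _ => (hdiff j).differentiableAt
  have hKl : (K : ℝ) < l := by exact_mod_cast hK
  have hP1 := isSplitProfile_of_slope_eq hKl hl hz1a hz1b
  have hP2 := isSplitProfile_of_common_value hz2a hz2b
  have hbudget : ∑ i ∈ Icc 1 J, g i (z1 i) = ∑ i ∈ Icc 1 J, g i (z2 i) := hz1G.trans hz2G.symm
  rw [min_le_iff, le_max_iff]
  constructor
  · by_contra! h
    exact (hP2.sum_lt_sum hderiv hmono (by linarith) hl hv hv hz2nn hz1nn h.1.le h.2 hP1).ne'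
      hbudget
  · by_contra! h
    exact (hP1.sum_lt_sum hderiv hmono (by linarith) hl hu (hz1nn _) hz1nn hz2nn h.1.le h.2
      hP2).ne hbudget

/-- Interleaving lemma: if candidate sizes `ℓ` and `ℓ+1` both satisfy the
budget identity, with common values `u` and `v` respectively, then `v` lies
between `u` and `u_{ℓ+1} = z1 (ℓ+1)` (the value of the `(ℓ+1)`-st coordinate
of the size-`ℓ` candidate). -/
theorem stmt13 (J K l : ℕ) (g : ℕ → ℝ → ℝ) (G : ℝ)
    (hconv : ∀ j, StrictConvexOn ℝ (Set.Ici 0) (g j))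
    (hdiff : ∀ j, Differentiable ℝ (g j))
    (hmono : ∀ j, StrictMonoOn (g j) (Set.Ici (0 : ℝ)))
    (horder : ∀ i j, i ≤ j → ∀ x : ℝ, 0 ≤ x → deriv (g i) x ≤ deriv (g j) x)
    (hd0 : ∀ j, deriv (g j) 0 = 0)
    (hG : 0 < G) (hK : K < l) (hl : l + 1 ≤ J)
    (u v : ℝ) (hu : 0 ≤ u) (hv : 0 ≤ v)
    (z1 z2 : ℕ → ℝ) (hz1nn : ∀ i, 0 ≤ z1 i) (hz2nn : ∀ i, 0 ≤ z2 i)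
    (hz1a : ∀ i ∈ Finset.Icc 1 l, z1 i = u)
    (hz1b : ∀ i ∈ Finset.Icc (l + 1) J,
      deriv (g i) (z1 i) = (∑ i ∈ Finset.Icc 1 l, deriv (g i) u) / ((l : ℝ) - K))
    (hz1G : ∑ i ∈ Finset.Icc 1 J, g i (z1 i) = G)
    (hz2a : ∀ i ∈ Finset.Icc 1 (l + 1), z2 i = v)
    (hz2b : ∀ i ∈ Finset.Icc (l + 2) J,
      deriv (g i) (z2 i) =
        (∑ i ∈ Finset.Icc 1 (l + 1), deriv (g i) v) / ((l : ℝ) + 1 - K))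
    (hz2G : ∑ i ∈ Finset.Icc 1 J, g i (z2 i) = G) :
    min u (z1 (l + 1)) ≤ v ∧ v ≤ max u (z1 (l + 1)) :=
  stmt13_general J K l g G hconv hdiff hmono hK hl u v hu hv z1 z2 hz1nn hz2nn hz1a hz1b hz1G hz2a
    hz2b hz2G
end

section
/- Under the Cost Ordering assumption, if candidate size ℓ in Calc_Z yields Error P (underestimate: z_{ℓ+1} > z_a), then candidate size ℓ+1 cannot yield Error Q. Specifically, with u, u_{ℓ+1}, v as before and u < v < u_{ℓ+1}, where θ_ℓ(u) = g'_{ℓ+1}(u_{ℓ+1}), Error Q at ℓ+1 (that is, (∑_{i=1}^{ℓ+1} g'_i(v))/(ℓ+1−K) < g'_{ℓ+1}(v)) leads to a contradiction. -/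
open Finset

/-- If candidate size `ℓ` yields Error P (so `u < v < u_{ℓ+1}`, with
`g'_{ℓ+1}(u_{ℓ+1}) = θ_ℓ(u)`), then candidate size `ℓ+1` cannot yield
Error Q. -/
theorem stmt14 (K l : ℕ) (g : ℕ → ℝ → ℝ)
    (hconv : ∀ j, StrictConvexOn ℝ (Set.Ici 0) (g j))
    (hdiff : ∀ j, Differentiable ℝ (g j))
    (hmono : ∀ j, StrictMonoOn (g j) (Set.Ici (0 : ℝ)))
    (horder : ∀ i j, i ≤ j → ∀ x : ℝ, 0 ≤ x → deriv (g i) x ≤ deriv (g j) x)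
    (hd0 : ∀ j, deriv (g j) 0 = 0)
    (hK : K < l)
    (u v ul1 : ℝ) (hu : 0 ≤ u)
    (huv : u < v) (hvul : v < ul1)
    (hstruct : deriv (g (l + 1)) ul1 =
      (∑ i ∈ Finset.Icc 1 l, deriv (g i) u) / ((l : ℝ) - K)) :
    ¬ ((∑ i ∈ Finset.Icc 1 (l + 1), deriv (g i) v) / ((l : ℝ) + 1 - K) <
        deriv (g (l + 1)) v) := by
  intro hQ
  have hv : (0:ℝ) ≤ v := le_of_lt (lt_of_le_of_lt hu huv)
  have hul : (0:ℝ) ≤ ul1 := le_of_lt (lt_of_le_of_lt hv hvul)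
  have hlK : (0:ℝ) < (l:ℝ) - K := by
    have : (K:ℝ) < l := by exact_mod_cast hK
    linarith
  have hlK1 : (0:ℝ) < (l:ℝ) + 1 - K := by linarith
  -- deriv of each g j is strict mono on Ici 0
  have hdstrict : ∀ j : ℕ, StrictMonoOn (deriv (g j)) (Set.Ici (0:ℝ)) :=
    fun j => (hconv j).strictMonoOn_deriv (fun x _ => (hdiff j).differentiableAt)
  -- sum at u ≤ sum at v for i in Icc 1 l
  have hsum : (∑ i ∈ Finset.Icc 1 l, deriv (g i) u) ≤ ∑ i ∈ Finset.Icc 1 l, deriv (g i) v :=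
    Finset.sum_le_sum fun i _ => le_of_lt ((hdstrict i) hu hv huv)
  -- split sum at l+1
  have hsplit : (∑ i ∈ Finset.Icc 1 (l + 1), deriv (g i) v)
      = (∑ i ∈ Finset.Icc 1 l, deriv (g i) v) + deriv (g (l+1)) v := by
    rw [← Finset.sum_Icc_succ_top (by omega : 1 ≤ l + 1)]
  -- Error Q rearranged
  have hQ' : (∑ i ∈ Finset.Icc 1 l, deriv (g i) v) < ((l:ℝ) - K) * deriv (g (l+1)) v := by
    have := (div_lt_iff₀ hlK1).mp hQ
    rw [hsplit] at this
    nlinarith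
  -- deriv g (l+1) at v < at ul1
  have hvl : deriv (g (l+1)) v < deriv (g (l+1)) ul1 := (hdstrict (l+1)) hv hul hvul
  have hstruct' : ((l:ℝ) - K) * deriv (g (l+1)) ul1 = ∑ i ∈ Finset.Icc 1 l, deriv (g i) u := by
    rw [hstruct]; field_simp
  nlinarith
end

section
/- Under the Cost Ordering assumption, if candidate size ℓ in Calc_Z is the correct optimal size (satisfying all conditions of Theorem 1), then candidate size ℓ+1 yields Error Q: g'_{ℓ+1}(v) > (∑_{i=1}^{ℓ+1} g'_i(v))/(ℓ+1−K), where v is the common value at size ℓ+1 and u > v > u_{ℓ+1} with θ_ℓ(u) = g'_{ℓ+1}(u_{ℓ+1}). -/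
open Finset

/-- If candidate size `ℓ` is the correct optimal size (so `u > v > u_{ℓ+1}`,
with `g'_{ℓ+1}(u_{ℓ+1}) = θ_ℓ(u)`), then candidate size `ℓ+1` yields Error Q:
`g'_{ℓ+1}(v) > (∑_{i=1}^{ℓ+1} g'_i(v))/(ℓ+1-K)`. -/
theorem stmt15 (K l : ℕ) (g : ℕ → ℝ → ℝ)
    (hconv : ∀ j, StrictConvexOn ℝ (Set.Ici 0) (g j))
    (hdiff : ∀ j, Differentiable ℝ (g j))
    (hmono : ∀ j, StrictMonoOn (g j) (Set.Ici (0 : ℝ)))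
    (horder : ∀ i j, i ≤ j → ∀ x : ℝ, 0 ≤ x → deriv (g i) x ≤ deriv (g j) x)
    (hd0 : ∀ j, deriv (g j) 0 = 0)
    (hK : K < l)
    (u v ul1 : ℝ) (hul1 : 0 ≤ ul1)
    (huv : v < u) (hvul : ul1 < v)
    (hstruct : deriv (g (l + 1)) ul1 =
      (∑ i ∈ Finset.Icc 1 l, deriv (g i) u) / ((l : ℝ) - K)) :
    (∑ i ∈ Finset.Icc 1 (l + 1), deriv (g i) v) / ((l : ℝ) + 1 - K) <
      deriv (g (l + 1)) v := by
  have hv0 : (0 : ℝ) ≤ v := le_of_lt (lt_of_le_of_lt hul1 hvul)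
  have hu0 : (0 : ℝ) ≤ u := le_of_lt (lt_of_le_of_lt hv0 huv)
  have hderiv_mono : ∀ j, StrictMonoOn (deriv (g j)) (Set.Ici (0 : ℝ)) := fun j =>
    (hconv j).strictMonoOn_deriv (fun x _ => (hdiff j).differentiableAt)
  have hlK : (0 : ℝ) < (l : ℝ) - K := by
    have : (K : ℝ) < l := by exact_mod_cast hK
    linarith
  -- θ_l(u) ≥ θ_l(v)
  have hsum : (∑ i ∈ Finset.Icc 1 l, deriv (g i) v) ≤ ∑ i ∈ Finset.Icc 1 l, deriv (g i) u := by
    apply Finset.sum_le_sum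
    intro i _
    exact le_of_lt ((hderiv_mono i) hv0 hu0 huv)
  -- g'_{l+1}(v) > g'_{l+1}(ul1) = θ_l(u) ≥ θ_l(v)
  have hkey : (∑ i ∈ Finset.Icc 1 l, deriv (g i) v) / ((l : ℝ) - K) < deriv (g (l + 1)) v := by
    have h1 : deriv (g (l + 1)) ul1 < deriv (g (l + 1)) v :=
      (hderiv_mono (l + 1)) hul1 hv0 hvul
    have h2 : (∑ i ∈ Finset.Icc 1 l, deriv (g i) v) / ((l : ℝ) - K) ≤
        (∑ i ∈ Finset.Icc 1 l, deriv (g i) u) / ((l : ℝ) - K) :=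
      div_le_div_of_nonneg_right hsum hlK.le |>.trans_eq rfl
    calc (∑ i ∈ Finset.Icc 1 l, deriv (g i) v) / ((l : ℝ) - K)
        ≤ (∑ i ∈ Finset.Icc 1 l, deriv (g i) u) / ((l : ℝ) - K) := h2
      _ = deriv (g (l + 1)) ul1 := hstruct.symm
      _ < deriv (g (l + 1)) v := h1
  -- arithmetic step
  have hsplit : (∑ i ∈ Finset.Icc 1 (l + 1), deriv (g i) v) =
      (∑ i ∈ Finset.Icc 1 l, deriv (g i) v) + deriv (g (l + 1)) v := by
    rw [← Finset.sum_Icc_succ_top (by omega : 1 ≤ l + 1)]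
  rw [hsplit]
  rw [div_lt_iff₀ (by linarith : (0 : ℝ) < (l : ℝ) + 1 - K)]
  rw [div_lt_iff₀ hlK] at hkey
  ring_nf
  ring_nf at hkey
  nlinarith [hkey]
end
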